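/- Let γ ∈ (0,1), let U ⊆ ℝᵐ, let f : ℝⁿ × ℝᵐ → ℝⁿ, let R : ℝⁿ × ℝᵐ → ℝ, and let V : ℝⁿ → ℝ be a bounded, continuously differentiable function satisfying, for all x ∈ ℝⁿ and all u ∈ U, the HJB inequality V(x) · ln γ + R(x,u) + ⟪∇V(x), f(x,u)⟫ ≤ 0. Suppose further that from the initial state x₀ there exists a control u* : [0,∞) → ℝᵐ with values in U and a trajectory x* : [0,∞) → ℝⁿ (differentiable, with x*'(t) = f(x*(t), u*(t)) for all t ≥ 0, x*(0) = x₀, and t ↦ γ^t · R(x*(t), u*(t)) integrable on [0,∞)) along which the HJB equality V(x*(t)) · ln γ + R(x*(t), u*(t)) + ⟪∇V(x*(t)), f(x*(t), u*(t))⟫ = 0 holds for all t ≥ 0. Then the supremum, over all controls u : [0,∞) → U with values in U and all associated trajectories x from x₀ for which t ↦ γ^t · R(x(t), u(t)) is integrable, of the discounted total reward ∫₀^∞ γ^τ · R(x(τ), u(τ)) dτ equals V(x₀), and this supremum is attained by the pair (x*, u*). -/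

import Mathlib

/-!
Along any trajectory, `W t = γ ^ t * V (x t)` has derivative
`γ ^ t * (V (x t) * log γ + ⟪∇V (x t), x' t⟫)`, so the HJB inequality says exactly that the
discounted reward `γ ^ t * R (x t) (u t)` is at most `-W' t`, with equality along `(x*, u*)`.
Integrating over `[0, T]` and letting `T → ∞`, where `W T → 0` because `V` is bounded and
`γ < 1`, every admissible reward is at most `W 0 = V x₀`, and the reward of `(x*, u*)` equals it.
-/

open MeasureTheory RealInnerProductSpace Filter Topology Set

theorem setIntegral_Ici_le_of_hasDerivAt_of_tendsto {φ W W' : ℝ → ℝ} {a : ℝ}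
    (hW : ∀ t ≥ a, HasDerivAt W (W' t) t) (hφ : ∀ t ≥ a, φ t ≤ -W' t)
    (hint : IntegrableOn φ (Ici a)) (hlim : Tendsto W atTop (𝓝 0)) :
    ∫ t in Ici a, φ t ≤ W a := by
  have hpartial : Tendsto (fun T => ∫ t in a..T, φ t) atTop (𝓝 (∫ t in Ici a, φ t)) := by
    rw [integral_Ici_eq_integral_Ioi]
    exact intervalIntegral_tendsto_integral_Ioi a (hint.mono_set Ioi_subset_Ici_self) tendsto_id
  have hbound : Tendsto (fun T => -W T - -W a) atTop (𝓝 (W a)) := by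
    simpa using (hlim.neg.sub_const (-W a))
  refine le_of_tendsto_of_tendsto hpartial hbound ?_
  filter_upwards [eventually_ge_atTop a] with T hT
  exact intervalIntegral.integral_le_sub_of_hasDeriv_right_of_le hT
    (fun s hs => (hW s hs.1).neg.continuousAt.continuousWithinAt)
    (fun s hs => (hW s hs.1.le).neg.hasDerivWithinAt)
    (hint.mono_set Icc_subset_Ici_self) (fun s hs => hφ s hs.1.le)

theorem setIntegral_Ici_eq_of_hasDerivAt_of_tendsto {φ W W' : ℝ → ℝ} {a : ℝ}
    (hW : ∀ t ≥ a, HasDerivAt W (W' t) t) (hφ : ∀ t ≥ a, φ t = -W' t)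
    (hint : IntegrableOn φ (Ici a)) (hlim : Tendsto W atTop (𝓝 0)) :
    ∫ t in Ici a, φ t = W a := by
  rw [integral_Ici_eq_integral_Ioi]
  simpa using integral_Ioi_of_hasDerivAt_of_tendsto' (f := fun t => -W t) (f' := φ)
    (fun t ht => (hφ t ht).symm ▸ (hW t ht).neg) (hint.mono_set Ioi_subset_Ici_self) hlim.neg

theorem tendsto_rpow_mul_atTop_of_bounded {γ : ℝ} (hγ₀ : 0 ≤ γ) (hγ₁ : γ < 1) {g : ℝ → ℝ}
    (hg : ∃ C, ∀ t, |g t| ≤ C) : Tendsto (fun t => γ ^ t * g t) atTop (𝓝 0) :=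
  (tendsto_rpow_atTop_of_base_lt_one γ (by linarith) hγ₁).zero_mul_isBoundedUnder_le
    (isBoundedUnder_of hg)

section Trajectory

variable {E M : Type*} [NormedAddCommGroup E] [InnerProductSpace ℝ E] [CompleteSpace E]
  {γ : ℝ} {V : E → ℝ}

theorem hasDerivAt_rpow_mul_comp {x : ℝ → E} {v : E} {t : ℝ} (hγ : 0 < γ)
    (hV : DifferentiableAt ℝ V (x t)) (hx : HasDerivAt x v t) :
    HasDerivAt (fun s => γ ^ s * V (x s))
      (γ ^ t * (V (x t) * Real.log γ + ⟪gradient V (x t), v⟫)) t := by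
  have hγt : HasDerivAt (fun s => γ ^ s) (γ ^ t * Real.log γ) t :=
    (Real.hasStrictDerivAt_const_rpow hγ t).hasDerivAt
  have hVx : HasDerivAt (fun s => V (x s)) ⟪gradient V (x t), v⟫ t := by
    simpa [InnerProductSpace.toDual_apply_apply, Function.comp_def] using
      hV.hasGradientAt.hasFDerivAt.comp_hasDerivAt t hx
  exact (hγt.mul hVx).congr_deriv (by ring)

variable {U : Set M} {f : E → M → E} {R : E → M → ℝ} {x : ℝ → E} {u : ℝ → M}

theorem setIntegral_discounted_reward_le (hγ : γ ∈ Ioo (0 : ℝ) 1)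
    (hVbound : ∃ C, ∀ y, |V y| ≤ C) (hV : Differentiable ℝ V)
    (hHJB : ∀ y, ∀ w ∈ U, V y * Real.log γ + R y w + ⟪gradient V y, f y w⟫ ≤ 0)
    (hu : ∀ t ≥ (0 : ℝ), u t ∈ U) (hx : ∀ t ≥ (0 : ℝ), HasDerivAt x (f (x t) (u t)) t)
    (hint : IntegrableOn (fun t => γ ^ t * R (x t) (u t)) (Ici 0)) :
    ∫ t in Ici (0 : ℝ), γ ^ t * R (x t) (u t) ≤ V (x 0) := by
  have hreward : ∀ t ≥ (0 : ℝ), γ ^ t * R (x t) (u t) ≤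
      -(γ ^ t * (V (x t) * Real.log γ + ⟪gradient V (x t), f (x t) (u t)⟫)) := fun t ht => by
    have hγt : 0 ≤ γ ^ t := Real.rpow_nonneg hγ.1.le t
    linarith [mul_le_mul_of_nonneg_left (hHJB (x t) (u t) (hu t ht)) hγt]
  simpa using setIntegral_Ici_le_of_hasDerivAt_of_tendsto
    (fun t ht => hasDerivAt_rpow_mul_comp hγ.1 (hV _) (hx t ht)) hreward hint
    (tendsto_rpow_mul_atTop_of_bounded hγ.1.le hγ.2 (hVbound.imp fun C hC t => hC (x t)))

theorem setIntegral_discounted_reward_eq (hγ : γ ∈ Ioo (0 : ℝ) 1)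
    (hVbound : ∃ C, ∀ y, |V y| ≤ C) (hV : Differentiable ℝ V)
    (hx : ∀ t ≥ (0 : ℝ), HasDerivAt x (f (x t) (u t)) t)
    (hint : IntegrableOn (fun t => γ ^ t * R (x t) (u t)) (Ici 0))
    (hHJBeq : ∀ t ≥ (0 : ℝ),
      V (x t) * Real.log γ + R (x t) (u t) + ⟪gradient V (x t), f (x t) (u t)⟫ = 0) :
    ∫ t in Ici (0 : ℝ), γ ^ t * R (x t) (u t) = V (x 0) := by
  have hreward : ∀ t ≥ (0 : ℝ), γ ^ t * R (x t) (u t) =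
      -(γ ^ t * (V (x t) * Real.log γ + ⟪gradient V (x t), f (x t) (u t)⟫)) := fun t ht => by
    linear_combination γ ^ t * hHJBeq t ht
  simpa using setIntegral_Ici_eq_of_hasDerivAt_of_tendsto
    (fun t ht => hasDerivAt_rpow_mul_comp hγ.1 (hV _) (hx t ht)) hreward hint
    (tendsto_rpow_mul_atTop_of_bounded hγ.1.le hγ.2 (hVbound.imp fun C hC t => hC (x t)))

end Trajectory

/-- Verification theorem: if a bounded `C¹` function `V` satisfies the HJB inequality
everywhere on `U`, and the HJB equality holds along some admissible trajectory
`(x*, u*)` from `x₀`, then `V(x₀)` is the supremum of the discounted total reward over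
all admissible control–trajectory pairs from `x₀`, and this supremum is attained by
`(x*, u*)`. -/
theorem value_isLUB_of_hjb {n m : ℕ} (γ : ℝ)
    (hγ : γ ∈ Set.Ioo (0 : ℝ) 1)
    (U : Set (EuclideanSpace ℝ (Fin m)))
    (f : EuclideanSpace ℝ (Fin n) → EuclideanSpace ℝ (Fin m) → EuclideanSpace ℝ (Fin n))
    (R : EuclideanSpace ℝ (Fin n) → EuclideanSpace ℝ (Fin m) → ℝ)
    (V : EuclideanSpace ℝ (Fin n) → ℝ)
    (hVbound : ∃ C : ℝ, ∀ y, |V y| ≤ C)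
    (hV : ContDiff ℝ 1 V)
    (hHJB : ∀ y : EuclideanSpace ℝ (Fin n), ∀ w ∈ U,
      V y * Real.log γ + R y w + ⟪gradient V y, f y w⟫ ≤ 0)
    (x₀ : EuclideanSpace ℝ (Fin n))
    (ustar : ℝ → EuclideanSpace ℝ (Fin m)) (xstar : ℝ → EuclideanSpace ℝ (Fin n))
    (hustar : ∀ t ≥ (0 : ℝ), ustar t ∈ U)
    (hxstar : ∀ t ≥ (0 : ℝ), HasDerivAt xstar (f (xstar t) (ustar t)) t)
    (hxstar0 : xstar 0 = x₀)
    (hintstar : IntegrableOn (fun t : ℝ => γ ^ t * R (xstar t) (ustar t)) (Set.Ici 0))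
    (hHJBeq : ∀ t ≥ (0 : ℝ),
      V (xstar t) * Real.log γ + R (xstar t) (ustar t) +
        ⟪gradient V (xstar t), f (xstar t) (ustar t)⟫ = 0) :
    IsLUB {r : ℝ | ∃ (x : ℝ → EuclideanSpace ℝ (Fin n)) (u : ℝ → EuclideanSpace ℝ (Fin m)),
        (∀ t ≥ (0 : ℝ), u t ∈ U) ∧
        (∀ t ≥ (0 : ℝ), HasDerivAt x (f (x t) (u t)) t) ∧
        x 0 = x₀ ∧
        IntegrableOn (fun t : ℝ => γ ^ t * R (x t) (u t)) (Set.Ici 0) ∧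
        r = ∫ τ in Set.Ici (0 : ℝ), γ ^ τ * R (x τ) (u τ)} (V x₀) ∧
      (∫ τ in Set.Ici (0 : ℝ), γ ^ τ * R (xstar τ) (ustar τ)) = V x₀ := by
  have hVdiff : Differentiable ℝ V := hV.differentiable one_ne_zero
  have hstar : ∫ τ in Set.Ici (0 : ℝ), γ ^ τ * R (xstar τ) (ustar τ) = V x₀ :=
    hxstar0 ▸ setIntegral_discounted_reward_eq hγ hVbound hVdiff hxstar hintstar hHJBeq
  refine ⟨⟨?_, fun b hb => hb ⟨xstar, ustar, hustar, hxstar, hxstar0, hintstar, hstar.symm⟩⟩,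
    hstar⟩
  rintro r ⟨x, u, hu, hx, rfl, hint, rfl⟩
  exact setIntegral_discounted_reward_le hγ hVbound hVdiff hHJB hu hx hint
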